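/- arXiv:2402.12018 — 2 statements merged into one kernel-verified Lean document; each statement's English description precedes it below -/
import Mathlib

section
/- Let $k \geq 2$, let $G$ be a graph, and let $S$, $W_0$, $V_1$ be pairwise disjoint vertex sets such that every $w \in W_0$ has at least $k^2$ neighbors in $S$. For $v \in V_1$ let $W_0(v) = \{w \in W_0 : \{w,v\} \in E(G)\}$. If $|W_0(v)| > (k-1)|S|$ for some $v \in V_1$, then $G$ contains a cycle of length $2k$ that intersects $S$. -/
/-!
Let `v ∈ V₁` have more than `(k - 1)|S|` neighbours in `W₀`, and call them `W`. The bipartite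
graph between `W` and `S` has at least `k²|W| > (k - 2)|W| + (k - 1)|S|` edges, so repeatedly
deleting vertices of `W` of degree at most `k - 2` and vertices of `S` of degree at most `k - 1`
never empties it. In the remaining core every vertex of `W` has `k - 1` neighbours in `S` and
every vertex of `S` has `k` neighbours in `W`, so a path `w₁ s₁ w₂ … s_{k-1} w_k` alternating
between the two sides can be grown greedily. Both ends are adjacent to `v`, which closes it into
a `2k`-cycle through `s₁ ∈ S`.
-/

open Finset

theorem Finset.exists_bipartite_core {α β : Type*} [DecidableEq α] [DecidableEq β]
    (r : α → β → Prop) [∀ a b, Decidable (r a b)] (p q : ℕ) (s : Finset α) (t : Finset β)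
    (h : p * #s + q * #t < ∑ a ∈ s, #(t.bipartiteAbove r a)) :
    ∃ s' ⊆ s, ∃ t' ⊆ t, s'.Nonempty ∧ (∀ a ∈ s', p < #(t'.bipartiteAbove r a)) ∧
      ∀ b ∈ t', q < #(s'.bipartiteBelow r b) := by
  induction hn : #s + #t using Nat.strong_induction_on generalizing s t with
  | _ n ih =>
  by_cases hlow_s : ∃ a ∈ s, #(t.bipartiteAbove r a) ≤ p
  · obtain ⟨a, ha, hdeg⟩ := hlow_s
    have hsum := sum_erase_add s (fun a => #(t.bipartiteAbove r a)) ha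
    rw [← card_erase_add_one ha] at h hn
    rw [mul_add_one] at h
    obtain ⟨s', hs', t', ht', hcore⟩ := ih _ (by omega) (s.erase a) t (by omega) rfl
    exact ⟨s', hs'.trans (erase_subset a s), t', ht', hcore⟩
  by_cases hlow_t : ∃ b ∈ t, #(s.bipartiteBelow r b) ≤ q
  · obtain ⟨b, hb, hdeg⟩ := hlow_t
    have hsum := sum_erase_add t (fun b => #(s.bipartiteBelow r b)) hb
    rw [sum_card_bipartiteAbove_eq_sum_card_bipartiteBelow] at h
    rw [← card_erase_add_one hb] at h hn
    rw [mul_add_one] at h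
    obtain ⟨s', hs', t', ht', hcore⟩ := ih _ (by omega) s (t.erase b) (by
      rw [sum_card_bipartiteAbove_eq_sum_card_bipartiteBelow]; omega) rfl
    exact ⟨s', hs', t', ht'.trans (erase_subset b t), hcore⟩
  push Not at hlow_s hlow_t
  refine ⟨s, subset_rfl, t, subset_rfl, ?_, hlow_s, hlow_t⟩
  rw [nonempty_iff_ne_empty]
  rintro rfl
  simp at h

namespace SimpleGraph

variable {V : Type*} {G : SimpleGraph V}

theorem Walk.IsPath.isCycle_cons_append {u v w : V} {p : G.Walk v w} (hp : p.IsPath)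
    (hlen : 0 < p.length) (hu : u ∉ p.support) (huv : G.Adj u v) (hwu : G.Adj w u) :
    ((Walk.cons huv p).append (Adj.toWalk hwu)).IsCycle :=
  (hp.cons hu).isCycle_append (Adj.isPath_toWalk hwu) (by simpa using hu)
    (Or.inl (by simpa using hlen))

theorem exists_isPath_alternating [DecidableEq V] [DecidableRel G.Adj] {A B : Finset V}
    (hAB : Disjoint A B) {n : ℕ} (hA : ∀ a ∈ A, n ≤ #(B.bipartiteAbove G.Adj a))
    (hB : ∀ b ∈ B, n < #(A.bipartiteBelow G.Adj b)) {x : V} (hx : x ∈ A) {m : ℕ} (hm : m ≤ n) :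
    ∃ y ∈ A, ∃ p : G.Walk y x, p.IsPath ∧ p.length = 2 * m ∧ p.support.toFinset ⊆ A ∪ B ∧
      #(p.support.toFinset ∩ A) = m + 1 ∧ #(p.support.toFinset ∩ B) = m := by
  induction m with
  | zero =>
    refine ⟨x, hx, .nil, .nil, rfl, ?_, ?_, ?_⟩ <;>
      simp [hx, Finset.disjoint_left.mp hAB hx]
  | succ m ih =>
    obtain ⟨y, hy, p, hp, hlen, hsub, hcardA, hcardB⟩ := ih (by omega)
    set T := p.support.toFinset
    obtain ⟨b, hb, hbT⟩ := exists_mem_notMem_of_card_lt_card (s := T ∩ B)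
      (t := B.bipartiteAbove G.Adj y) (by have := hA y hy; omega)
    rw [mem_bipartiteAbove] at hb
    obtain ⟨a, ha, haT⟩ := exists_mem_notMem_of_card_lt_card (s := T ∩ A)
      (t := A.bipartiteBelow G.Adj b) (by have := hB b hb.1; omega)
    rw [mem_bipartiteBelow] at ha
    have hbp : b ∉ p.support := fun h => hbT (mem_inter.mpr ⟨List.mem_toFinset.mpr h, hb.1⟩)
    have hap : a ∉ p.support := fun h => haT (mem_inter.mpr ⟨List.mem_toFinset.mpr h, ha.1⟩)
    have hab : a ≠ b := fun h => Finset.disjoint_left.mp hAB ha.1 (h ▸ hb.1)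
    refine ⟨a, ha.1, .cons ha.2 (.cons hb.2.symm p), (hp.cons hbp).cons (by simp [hab, hap]),
      by simp [hlen]; ring, ?_, ?_, ?_⟩
    · simp only [Walk.support_cons, List.toFinset_cons, insert_subset_iff, mem_union]
      exact ⟨Or.inl ha.1, Or.inr hb.1, hsub⟩
    · simp only [Walk.support_cons, List.toFinset_cons]
      rw [insert_inter_of_mem ha.1, insert_inter_of_notMem (Finset.disjoint_right.mp hAB hb.1),
        card_insert_of_notMem (fun h => hap (List.mem_toFinset.mp (mem_inter.mp h).1)), hcardA]
    · simp only [Walk.support_cons, List.toFinset_cons]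
      rw [insert_inter_of_notMem (Finset.disjoint_left.mp hAB ha.1), insert_inter_of_mem hb.1,
        card_insert_of_notMem hbT, hcardB]

end SimpleGraph

open SimpleGraph

theorem stmt3_general {V : Type*}
    (G : SimpleGraph V) [DecidableRel G.Adj]
    (k : ℕ) (hk : 2 ≤ k) (S W0 V1 : Finset V)
    (h1 : Disjoint S W0) (h2 : Disjoint S V1) (h3 : Disjoint W0 V1)
    (hdeg : ∀ w ∈ W0, k ^ 2 ≤ (S.filter (fun s => G.Adj w s)).card)
    (hbig : ∃ v ∈ V1, (k - 1) * S.card < (W0.filter (fun w => G.Adj w v)).card) :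
    ∃ (x : V) (c : G.Walk x x), c.IsCycle ∧ c.length = 2 * k ∧
      ∃ s ∈ S, s ∈ c.support := by
  classical
  obtain ⟨v, hv, hbig⟩ := hbig
  set W := W0.filter (fun w => G.Adj w v)
  have hedges : (k - 2) * #W + (k - 1) * #S < ∑ w ∈ W, #(S.bipartiteAbove G.Adj w) :=
    calc (k - 2) * #W + (k - 1) * #S < (k - 2) * #W + #W := by omega
      _ ≤ k ^ 2 * #W := by
        rw [← add_one_mul]
        gcongr
        exact (by omega : k - 2 + 1 ≤ k).trans (Nat.le_self_pow two_ne_zero k)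
      _ ≤ ∑ w ∈ W, #(S.bipartiteAbove G.Adj w) := by
        rw [mul_comm, ← smul_eq_mul]
        exact card_nsmul_le_sum _ _ _ fun w hw => hdeg w (filter_subset _ _ hw)
  obtain ⟨A, hAW, B, hBS, ⟨x, hx⟩, hA, hB⟩ := exists_bipartite_core G.Adj _ _ W S hedges
  have hAB : Disjoint A B := (h1.mono hBS (hAW.trans (filter_subset _ _))).symm
  obtain ⟨y, hy, p, hp, hlen, hsub, -, hcardB⟩ := exists_isPath_alternating hAB
    (n := k - 1) (fun a ha => by have := hA a ha; omega) hB hx le_rfl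
  have hvp : v ∉ p.support := fun h => by
    rcases mem_union.mp (hsub (List.mem_toFinset.mpr h)) with h | h
    · exact disjoint_left.mp h3 (filter_subset _ _ (hAW h)) hv
    · exact disjoint_left.mp h2 (hBS h) hv
  obtain ⟨s, hs⟩ : (p.support.toFinset ∩ B).Nonempty := by rw [← card_pos, hcardB]; omega
  rw [mem_inter, List.mem_toFinset] at hs
  refine ⟨v, _, hp.isCycle_cons_append (by omega) hvp (mem_filter.mp (hAW hy)).2.symm
    (mem_filter.mp (hAW hx)).2, by simp [hlen]; omega, s, hBS hs.2, by simp [hs.1]⟩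

theorem stmt3 {V : Type*} [Fintype V] [DecidableEq V]
    (G : SimpleGraph V) [DecidableRel G.Adj]
    (k : ℕ) (hk : 2 ≤ k) (S W0 V1 : Finset V)
    (hS : S.Nonempty) (hW0 : W0.Nonempty) (hV1 : V1.Nonempty)
    (h1 : Disjoint S W0) (h2 : Disjoint S V1) (h3 : Disjoint W0 V1)
    (hdeg : ∀ w ∈ W0, k ^ 2 ≤ (S.filter (fun s => G.Adj w s)).card)
    (hbig : ∃ v ∈ V1, (k - 1) * S.card < (W0.filter (fun w => G.Adj w v)).card) :
    ∃ (x : V) (c : G.Walk x x), c.IsCycle ∧ c.length = 2 * k ∧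
      ∃ s ∈ S, s ∈ c.support :=
  stmt3_general G k hk S W0 V1 h1 h2 h3 hdeg hbig
end

section
/- Let $H$ be a finite bipartite graph with parts $S$ and $W$, and suppose a nested sequence of subgraphs $H = H_{2q} \supseteq H_{2q-1} \supseteq \dots \supseteq H_0$ is defined by: $H_{2\gamma-1}$ consists of the edges of $H_{2\gamma}$ incident to vertices $w \in W$ with $\deg_{H_{2\gamma}}(w) > 2\gamma$, and $H_{2\gamma-2}$ consists of the edges of $H_{2\gamma-1}$ incident to vertices $s \in S$ with $\deg_{H_{2\gamma-1}}(s) > 2\gamma - 1$. If $H_0$ is non-empty, then $H$ contains a simple path on $4q+1$ vertices with both endpoints in $S$, alternating between $S$ and $W$. -/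
open SimpleGraph Set

private lemma walk_concat_isPath' {V : Type*} {G : SimpleGraph V} {u v w : V}
    (p : G.Walk u v) (h : G.Adj v w) (hp : p.IsPath) (hw : w ∉ p.support) :
    (p.concat h).IsPath := by
  rw [← SimpleGraph.Walk.isPath_reverse_iff, SimpleGraph.Walk.reverse_concat]
  exact hp.reverse.cons (by simpa [SimpleGraph.Walk.support_reverse] using hw)

theorem stmt15 {V : Type*} [Fintype V] (q : ℕ)
    (Hseq : ℕ → SimpleGraph V) (S W : Set V)
    (hdisj : Disjoint S W)
    (hbip : ∀ u v : V, (Hseq (2 * q)).Adj u v → (u ∈ S ∧ v ∈ W) ∨ (u ∈ W ∧ v ∈ S))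
    (hodd : ∀ γ, 1 ≤ γ → γ ≤ q → ∀ u v : V,
      (Hseq (2 * γ - 1)).Adj u v ↔ (Hseq (2 * γ)).Adj u v ∧
        (∀ w ∈ ({u, v} : Set V), w ∈ W →
          2 * γ < ((Hseq (2 * γ)).neighborSet w).ncard))
    (heven : ∀ γ, 1 ≤ γ → γ ≤ q → ∀ u v : V,
      (Hseq (2 * γ - 2)).Adj u v ↔ (Hseq (2 * γ - 1)).Adj u v ∧
        (∀ s ∈ ({u, v} : Set V), s ∈ S →
          2 * γ - 1 < ((Hseq (2 * γ - 1)).neighborSet s).ncard))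
    (hne : ∃ u v : V, (Hseq 0).Adj u v) :
    ∃ (a b : V) (p : (Hseq (2 * q)).Walk a b),
      p.IsPath ∧ p.length = 4 * q ∧ a ∈ S ∧ b ∈ S := by
  classical
  set side : ℕ → Set V := fun j => if j % 2 = 0 then S else W with hside
  have hsideS : ∀ j, j % 2 = 0 → side j = S := fun j h => by simp [hside, h]
  have hsideW : ∀ j, j % 2 = 1 → side j = W := fun j h => by simp [hside, h]
  have hside2 : ∀ j, side (j + 2) = side j := fun j => by
    simp [hside, Nat.add_mod_right]
  have hsidedisj : ∀ j, Disjoint (side j) (side (j + 1)) := by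
    intro j
    rcases Nat.mod_two_eq_zero_or_one j with h | h
    · rw [hsideS j h, hsideW (j+1) (by omega)]; exact hdisj
    · rw [hsideW j h, hsideS (j+1) (by omega)]; exact hdisj.symm
  -- monotonicity of the sequence
  have mono_step : ∀ k, k < 2*q → ∀ u v, (Hseq k).Adj u v → (Hseq (k+1)).Adj u v := by
    intro k hk u v h
    rcases Nat.mod_two_eq_zero_or_one k with hpar | hpar
    · obtain ⟨γ', rfl⟩ : ∃ t, k = 2*t := ⟨k/2, by omega⟩
      have h1 := (heven (γ'+1) (by omega) (by omega) u v).mp (by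
        have he : 2*(γ'+1)-2 = 2*γ' := by omega
        rwa [he])
      have h21 : 2*(γ'+1)-1 = 2*γ'+1 := by omega
      rw [h21] at h1
      exact h1.1
    · obtain ⟨γ', rfl⟩ : ∃ t, k = 2*t+1 := ⟨k/2, by omega⟩
      have h1 := (hodd (γ'+1) (by omega) (by omega) u v).mp (by
        have he : 2*(γ'+1)-1 = 2*γ'+1 := by omega
        rwa [he])
      have h2 : 2*(γ'+1) = 2*γ'+1+1 := by omega
      rw [h2] at h1
      exact h1.1
  have mono : ∀ k, k ≤ 2*q → ∀ u v, (Hseq k).Adj u v → (Hseq (2*q)).Adj u v := by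
    have key : ∀ d k, k + d = 2*q → ∀ u v, (Hseq k).Adj u v → (Hseq (2*q)).Adj u v := by
      intro d
      induction d with
      | zero =>
        intro k hk u v h
        have : k = 2*q := by omega
        exact this ▸ h
      | succ n ih =>
        intro k hk u v h
        exact ih (k+1) (by omega) u v (mono_step k (by omega) u v h)
    intro k hk
    exact key (2*q - k) k (by omega)
  -- degree lemma
  have deg : ∀ j, j < 2*q → ∀ a x, (Hseq j).Adj a x → a ∈ side j →
      j + 1 < ((Hseq (j+1)).neighborSet a).ncard := by
    intro j hj a x hax ha
    rcases Nat.mod_two_eq_zero_or_one j with hpar | hpar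
    · obtain ⟨γ', rfl⟩ : ∃ t, j = 2*t := ⟨j/2, by omega⟩
      have haS : a ∈ S := by rwa [hsideS _ hpar] at ha
      have h1 := (heven (γ'+1) (by omega) (by omega) a x).mp (by
        have he : 2*(γ'+1)-2 = 2*γ' := by omega
        rwa [he])
      have h2 := h1.2 a (by simp) haS
      have h21 : 2*(γ'+1)-1 = 2*γ'+1 := by omega
      rw [h21] at h2
      omega
    · obtain ⟨γ', rfl⟩ : ∃ t, j = 2*t+1 := ⟨j/2, by omega⟩
      have haW : a ∈ W := by rwa [hsideW _ hpar] at ha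
      have h1 := (hodd (γ'+1) (by omega) (by omega) a x).mp (by
        have he : 2*(γ'+1)-1 = 2*γ'+1 := by omega
        rwa [he])
      have h2 := h1.2 a (by simp) haW
      have h21 : 2*(γ'+1) = 2*γ'+1+1 := by omega
      rw [h21] at h2
      omega
  -- bipartiteness w.r.t. sides
  have bipside : ∀ k, k ≤ 2*q → ∀ u v, (Hseq k).Adj u v → ∀ j, u ∈ side j →
      v ∈ side (j+1) := by
    intro k hk u v h j hu
    have htop := mono k hk u v h
    rcases Nat.mod_two_eq_zero_or_one j with hpar | hpar
    · rw [hsideS _ hpar] at hu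
      rw [hsideW (j+1) (by omega)]
      rcases hbip u v htop with ⟨_, hvW⟩ | ⟨huW, _⟩
      · exact hvW
      · exact absurd huW (Set.disjoint_left.mp hdisj hu)
    · rw [hsideW _ hpar] at hu
      rw [hsideS (j+1) (by omega)]
      rcases hbip u v htop with ⟨huS, _⟩ | ⟨_, hvS⟩
      · exact absurd hu (Set.disjoint_left.mp hdisj huS)
      · exact hvS
  -- picking a fresh neighbor
  have pick : ∀ j, j < 2*q → ∀ (a : V) (F : Set V),
      a ∈ side j → (∃ x, (Hseq j).Adj a x) → (F ∩ side (j+1)).ncard ≤ j + 1 →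
      ∃ w, (Hseq (j+1)).Adj a w ∧ w ∉ F ∧ w ∈ side (j+1) := by
    intro j hj a F ha hax hF
    obtain ⟨x, hax⟩ := hax
    have hdeg := deg j hj a x hax ha
    have hsub : ¬ ((Hseq (j+1)).neighborSet a ⊆ F ∩ side (j+1)) := by
      intro hsub
      have := Set.ncard_le_ncard hsub (Set.toFinite _)
      omega
    rw [Set.not_subset] at hsub
    obtain ⟨w, hw, hwF⟩ := hsub
    rw [SimpleGraph.mem_neighborSet] at hw
    have hwside : w ∈ side (j+1) := bipside (j+1) (by omega) a w hw j ha
    exact ⟨w, hw, fun hwF' => hwF ⟨hwF', hwside⟩, hwside⟩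
  -- the main construction
  have claim : ∀ j, j ≤ 2*q → ∃ (a b : V) (p : (Hseq (2*q)).Walk a b),
      p.IsPath ∧ p.length = 2*j ∧ a ∈ side j ∧ b ∈ side j ∧
      (∃ x, (Hseq j).Adj a x) ∧ (∃ x, (Hseq j).Adj b x) ∧
      ({v | v ∈ p.support} ∩ side j).ncard ≤ j + 1 ∧
      ({v | v ∈ p.support} ∩ side (j+1)).ncard ≤ j := by
    intro j
    induction j with
    | zero =>
      intro _
      obtain ⟨u, v, huv⟩ := hne
      have base : ∀ s x : V, (Hseq 0).Adj s x → s ∈ S →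
          ∃ (a b : V) (p : (Hseq (2*q)).Walk a b),
          p.IsPath ∧ p.length = 2*0 ∧ a ∈ side 0 ∧ b ∈ side 0 ∧
          (∃ x, (Hseq 0).Adj a x) ∧ (∃ x, (Hseq 0).Adj b x) ∧
          ({v | v ∈ p.support} ∩ side 0).ncard ≤ 0 + 1 ∧
          ({v | v ∈ p.support} ∩ side (0+1)).ncard ≤ 0 := by
        intro s x hsx hsS
        have hs0 : s ∈ side 0 := by rw [hsideS 0 (by omega)]; exact hsS
        refine ⟨s, s, SimpleGraph.Walk.nil, SimpleGraph.Walk.IsPath.nil, by simp,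
          hs0, hs0, ⟨x, hsx⟩, ⟨x, hsx⟩, ?_, ?_⟩
        · have hsub : ({v | v ∈ (SimpleGraph.Walk.nil : (Hseq (2*q)).Walk s s).support}
              ∩ side 0) ⊆ {s} := by
            intro v hv
            simpa using hv.1
          calc _ ≤ ({s} : Set V).ncard := Set.ncard_le_ncard hsub (Set.toFinite _)
            _ = 1 := Set.ncard_singleton s
        · have hsub : ({v | v ∈ (SimpleGraph.Walk.nil : (Hseq (2*q)).Walk s s).support}
              ∩ side (0+1)) ⊆ (∅ : Set V) := by
            intro v hv
            have hv1 : v = s := by simpa using hv.1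
            have hv2 : v ∈ W := by rw [← hsideW (0+1) (by omega)]; exact hv.2
            exact absurd hv2 (Set.disjoint_left.mp hdisj (hv1 ▸ hsS))
          have := Set.ncard_le_ncard hsub (Set.toFinite _)
          simpa using this
      rcases hbip u v (mono 0 (by omega) u v huv) with ⟨huS, _⟩ | ⟨_, hvS⟩
      · exact base u v huv huS
      · exact base v u huv.symm hvS
    | succ j ih =>
      intro hj
      obtain ⟨a, b, p, hp, hlen, haside, hbside, hae, hbe, hc1, hc2⟩ := ih (by omega)
      have hj' : j < 2*q := by omega
      -- extend at the a-end
      obtain ⟨w1, hw1adj, hw1F, hw1side⟩ :=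
        pick j hj' a {v | v ∈ p.support} haside hae (le_trans hc2 (by omega))
      have hw1sup : w1 ∉ p.support := hw1F
      have he1 : (Hseq (2*q)).Adj w1 a := mono (j+1) (by omega) a w1 hw1adj |>.symm
      set p1 : (Hseq (2*q)).Walk w1 b := SimpleGraph.Walk.cons he1 p with hp1def
      have hp1 : p1.IsPath := hp.cons hw1sup
      -- extend at the b-end
      have hcount1 : ({v | v ∈ p1.support} ∩ side (j+1)).ncard ≤ j + 1 := by
        have hsub : ({v | v ∈ p1.support} ∩ side (j+1)) ⊆
            insert w1 ({v | v ∈ p.support} ∩ side (j+1)) := by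
          intro v hv
          have hv1 : v = w1 ∨ v ∈ p.support := by
            simpa [hp1def, SimpleGraph.Walk.support_cons] using hv.1
          rcases hv1 with rfl | hvp
          · exact Set.mem_insert _ _
          · exact Set.mem_insert_of_mem _ ⟨hvp, hv.2⟩
        calc _ ≤ (insert w1 ({v | v ∈ p.support} ∩ side (j+1))).ncard :=
              Set.ncard_le_ncard hsub (Set.toFinite _)
          _ ≤ ({v | v ∈ p.support} ∩ side (j+1)).ncard + 1 := Set.ncard_insert_le _ _
          _ ≤ j + 1 := by omega
      obtain ⟨w2, hw2adj, hw2F, hw2side⟩ :=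
        pick j hj' b {v | v ∈ p1.support} hbside hbe hcount1
      have hw2sup : w2 ∉ p1.support := hw2F
      have he2 : (Hseq (2*q)).Adj b w2 := mono (j+1) (by omega) b w2 hw2adj
      set p2 : (Hseq (2*q)).Walk w1 w2 := p1.concat he2 with hp2def
      have hp2 : p2.IsPath := walk_concat_isPath' p1 he2 hp1 hw2sup
      have hsupp2 : {v | v ∈ p2.support} =
          insert w1 (insert w2 {v | v ∈ p.support}) := by
        ext v
        simp only [hp2def, hp1def, SimpleGraph.Walk.support_concat,
          SimpleGraph.Walk.support_cons, List.concat_eq_append, List.mem_append,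
          List.mem_cons, List.mem_singleton, Set.mem_setOf_eq, Set.mem_insert_iff,
          List.not_mem_nil, or_false]
        tauto
      refine ⟨w1, w2, p2, hp2, ?_, hw1side, hw2side, ⟨a, hw1adj.symm⟩, ⟨b, hw2adj.symm⟩,
        ?_, ?_⟩
      · simp only [hp2def, hp1def, SimpleGraph.Walk.length_concat,
          SimpleGraph.Walk.length_cons, hlen]
        omega
      · -- count in side (j+1)
        have hsub : ({v | v ∈ p2.support} ∩ side (j+1)) ⊆
            insert w1 (insert w2 ({v | v ∈ p.support} ∩ side (j+1))) := by
          intro v hv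
          rw [hsupp2] at hv
          rcases hv.1 with rfl | rfl | hvp
          · exact Set.mem_insert _ _
          · exact Set.mem_insert_of_mem _ (Set.mem_insert _ _)
          · exact Set.mem_insert_of_mem _ (Set.mem_insert_of_mem _ ⟨hvp, hv.2⟩)
        calc _ ≤ (insert w1 (insert w2 ({v | v ∈ p.support} ∩ side (j+1)))).ncard :=
              Set.ncard_le_ncard hsub (Set.toFinite _)
          _ ≤ (insert w2 ({v | v ∈ p.support} ∩ side (j+1))).ncard + 1 :=
              Set.ncard_insert_le _ _
          _ ≤ ({v | v ∈ p.support} ∩ side (j+1)).ncard + 1 + 1 := by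
              have := Set.ncard_insert_le w2 ({v | v ∈ p.support} ∩ side (j+1))
              omega
          _ ≤ j + 1 + 1 := by omega
      · -- count in side (j+2) = side j
        have hsub : ({v | v ∈ p2.support} ∩ side (j+1+1)) ⊆
            ({v | v ∈ p.support} ∩ side j) := by
          intro v hv
          have hvside : v ∈ side j := by rw [← hside2 j]; exact hv.2
          rw [hsupp2] at hv
          rcases hv.1 with rfl | rfl | hvp
          · exact absurd hvside (Set.disjoint_right.mp (hsidedisj j) hw1side)
          · exact absurd hvside (Set.disjoint_right.mp (hsidedisj j) hw2side)
          · exact ⟨hvp, hvside⟩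
        calc _ ≤ ({v | v ∈ p.support} ∩ side j).ncard :=
              Set.ncard_le_ncard hsub (Set.toFinite _)
          _ ≤ j + 1 := hc1
  obtain ⟨a, b, p, hp, hlen, haside, hbside, _, _, _, _⟩ := claim (2*q) le_rfl
  refine ⟨a, b, p, hp, by omega, ?_, ?_⟩
  · rwa [hsideS (2*q) (by omega)] at haside
  · rwa [hsideS (2*q) (by omega)] at hbside
end
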